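/- arXiv:2602.13412 — 4 statements merged into one kernel-verified Lean document; each statement's English description precedes it below -/
import Mathlib

section
/- Let F'(1) = 9(C(φ) - 11φ^20)/(4A(φ) + C(φ) + 33φ^20) with A(φ) = φ^10 ∑_{j=0}^{10} φ^{2j} and C(φ) = ∑_{j=0}^{10} φ^{4j}. Then F'(1) admits the factorization F'(1) = 9(φ-1)^2(φ+1)^2(φ^2+1)^2 Q(φ)/P(φ), where Q(φ) = φ^32 + 3φ^28 + 6φ^24 + 10φ^20 + 15φ^16 + 10φ^12 + 6φ^8 + 3φ^4 + 1 and P(φ) = φ^40 + φ^36 + φ^32 + 4φ^30 + 5φ^28 + 4φ^26 + 5φ^24 + 4φ^22 + 38φ^20 + 4φ^18 + 5φ^16 + 4φ^14 + 5φ^12 + 4φ^10 + φ^8 + φ^4 + 1. Consequently F'(1) ≥ 0 for all real φ, with equality if and only if φ = ±1. -/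
/-- Factorization and nonnegativity of `F'(1)` for the mixed spin-(5,1/2)
Ising recursion on the Cayley tree of order three. -/
theorem stmt_3 (φ : ℝ) (A C P Q F' : ℝ)
    (hA : A = φ ^ 10 * ∑ j ∈ Finset.range 11, φ ^ (2 * j))
    (hC : C = ∑ j ∈ Finset.range 11, φ ^ (4 * j))
    (hQ : Q = φ ^ 32 + 3 * φ ^ 28 + 6 * φ ^ 24 + 10 * φ ^ 20 + 15 * φ ^ 16
        + 10 * φ ^ 12 + 6 * φ ^ 8 + 3 * φ ^ 4 + 1)
    (hP : P = φ ^ 40 + φ ^ 36 + φ ^ 32 + 4 * φ ^ 30 + 5 * φ ^ 28 + 4 * φ ^ 26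
        + 5 * φ ^ 24 + 4 * φ ^ 22 + 38 * φ ^ 20 + 4 * φ ^ 18 + 5 * φ ^ 16
        + 4 * φ ^ 14 + 5 * φ ^ 12 + 4 * φ ^ 10 + φ ^ 8 + φ ^ 4 + 1)
    (hF : F' = 9 * (C - 11 * φ ^ 20) / (4 * A + C + 33 * φ ^ 20)) :
    F' = 9 * (φ - 1) ^ 2 * (φ + 1) ^ 2 * (φ ^ 2 + 1) ^ 2 * Q / P ∧
    0 ≤ F' ∧ (F' = 0 ↔ φ = 1 ∨ φ = -1) := by
  simp only [Finset.sum_range_succ, Finset.sum_range_zero] at hA hC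
  have hQpos : 0 < Q := by rw [hQ]; positivity
  have hPpos : 0 < P := by rw [hP]; positivity
  have hden : 4 * A + C + 33 * φ ^ 20 = P := by rw [hA, hC, hP]; ring
  have hnum : 9 * (C - 11 * φ ^ 20)
      = 9 * (φ - 1) ^ 2 * (φ + 1) ^ 2 * (φ ^ 2 + 1) ^ 2 * Q := by
    rw [hC, hQ]; ring
  have hfac : F' = 9 * (φ - 1) ^ 2 * (φ + 1) ^ 2 * (φ ^ 2 + 1) ^ 2 * Q / P := by
    rw [hF, hden, hnum]
  refine ⟨hfac, ?_, ?_⟩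
  · rw [hfac]; positivity
  · rw [hfac]
    rw [div_eq_zero_iff]
    constructor
    · rintro (h | h)
      · have h2 : (φ - 1) ^ 2 * (φ + 1) ^ 2 = 0 := by
          have hx : (0:ℝ) < 9 * (φ ^ 2 + 1) ^ 2 * Q := by positivity
          by_contra hne
          have : (0:ℝ) < (φ - 1) ^ 2 * (φ + 1) ^ 2 := by
            rcases lt_or_eq_of_le (by positivity : (0:ℝ) ≤ (φ - 1) ^ 2 * (φ + 1) ^ 2) with h' | h'
            · exact h'
            · exact absurd h'.symm hne
          nlinarith [h, this, hx]
        rcases mul_eq_zero.mp h2 with h3 | h3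
        · left; have := pow_eq_zero_iff (n := 2) (by norm_num) |>.mp h3; linarith
        · right; have := pow_eq_zero_iff (n := 2) (by norm_num) |>.mp h3; linarith
      · exact absurd h (ne_of_gt hPpos)
    · rintro (h | h) <;> subst h <;> left <;> ring
end

section
/- For φ > 0, the Dobrushin coefficient of the (2s+1)×2 row-stochastic matrix P^{(s)}(φ) whose row indexed by i ∈ {-s,...,s} is (1/(1+φ^{2i}), φ^{2i}/(1+φ^{2i})) equals |φ^{2s} - 1|/(φ^{2s} + 1). That is, (1/2) max over pairs of rows of the ℓ¹ distance between rows equals |φ^{2s}-1|/(φ^{2s}+1). -/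
/-- The Dobrushin coefficient of the (2s+1)×2 row-stochastic matrix
`P^{(s)}(φ)` equals `|φ^{2s} - 1|/(φ^{2s} + 1)`. -/
theorem stmt_4 (s : ℕ) (hs : 1 ≤ s) (φ : ℝ) (hφ : 0 < φ)
    (P : ℤ → Fin 2 → ℝ)
    (hP0 : ∀ i : ℤ, P i 0 = 1 / (1 + φ ^ (2 * i)))
    (hP1 : ∀ i : ℤ, P i 1 = φ ^ (2 * i) / (1 + φ ^ (2 * i)))
    (hne : ((Finset.Icc (-(s : ℤ)) (s : ℤ)) ×ˢ (Finset.Icc (-(s : ℤ)) (s : ℤ))).Nonempty) :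
    ((Finset.Icc (-(s : ℤ)) (s : ℤ)) ×ˢ (Finset.Icc (-(s : ℤ)) (s : ℤ))).sup' hne
      (fun p => (1 / 2) * ∑ ℓ : Fin 2, |P p.1 ℓ - P p.2 ℓ|)
    = |φ ^ (2 * s) - 1| / (φ ^ (2 * s) + 1) := by
  set f : ℤ → ℝ := fun i => 1 / (1 + φ ^ (2 * i)) with hf
  have hzpos : ∀ i : ℤ, (0:ℝ) < φ ^ (2 * i) := fun i => zpow_pos hφ _
  have hpos : ∀ i : ℤ, (0:ℝ) < 1 + φ ^ (2 * i) := fun i => by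
    have := hzpos i; linarith
  have hterm : ∀ i j : ℤ, (1/2 : ℝ) * ∑ ℓ : Fin 2, |P i ℓ - P j ℓ| = |f i - f j| := by
    intro i j
    have h0 : P i 0 - P j 0 = f i - f j := by rw [hP0, hP0]
    have h1 : P i 1 - P j 1 = -(f i - f j) := by
      rw [hP1, hP1, hf]
      have hi := (hpos i).ne'
      have hj := (hpos j).ne'
      field_simp
      ring
    rw [Fin.sum_univ_two, h0, h1, abs_neg]
    ring
  have hmono : ∀ i j : ℤ, i ≤ j → 1 ≤ φ → f j ≤ f i := by
    intro i j hij h1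
    apply div_le_div_of_nonneg_left (by norm_num) (hpos i)
    have : φ ^ (2 * i) ≤ φ ^ (2 * j) := zpow_le_zpow_right₀ h1 (by linarith)
    linarith
  have hmono' : ∀ i j : ℤ, i ≤ j → φ ≤ 1 → f i ≤ f j := by
    intro i j hij h1
    apply div_le_div_of_nonneg_left (by norm_num) (hpos j)
    have : φ ^ (2 * j) ≤ φ ^ (2 * i) :=
      zpow_le_zpow_right_of_le_one₀ hφ h1 (by linarith)
    linarith
  have hxeq : φ ^ (2 * (s:ℤ)) = φ ^ (2 * s) := by
    rw [show (2 * (s:ℤ)) = ((2 * s : ℕ) : ℤ) by push_cast; ring, zpow_natCast]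
  have hxinv : φ ^ (2 * (-(s:ℤ))) = (φ ^ (2 * s))⁻¹ := by
    rw [show (2 * (-(s:ℤ))) = -((2 * s : ℕ) : ℤ) by push_cast; ring, zpow_neg, zpow_natCast]
  have hxpos : (0:ℝ) < φ ^ (2 * s) := by positivity
  have hval : f (-(s:ℤ)) - f (s:ℤ) = (φ ^ (2 * s) - 1) / (φ ^ (2 * s) + 1) := by
    simp only [hf]
    rw [hxeq, hxinv]
    have h1 : (1:ℝ) + (φ ^ (2*s))⁻¹ ≠ 0 := by positivity
    have h2 : (1:ℝ) + φ ^ (2*s) ≠ 0 := by positivity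
    have h3 : (φ:ℝ) ^ (2*s) + 1 ≠ 0 := by positivity
    field_simp
    ring
  have habs : |φ ^ (2 * s) - 1| / (φ ^ (2 * s) + 1) = |f (-(s:ℤ)) - f (s:ℤ)| := by
    rw [hval, abs_div, abs_of_pos (by linarith : (0:ℝ) < φ ^ (2*s) + 1)]
  have hmem : ((-(s:ℤ)), (s:ℤ)) ∈
      ((Finset.Icc (-(s : ℤ)) (s : ℤ)) ×ˢ (Finset.Icc (-(s : ℤ)) (s : ℤ))) := by
    simp [Finset.mem_product, Finset.mem_Icc]
  apply le_antisymm
  · apply Finset.sup'_le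
    intro p hp
    simp only [Finset.mem_product, Finset.mem_Icc] at hp
    rw [hterm, habs]
    rcases le_total 1 φ with h1 | h1
    · have e1 := hmono (-(s:ℤ)) p.1 hp.1.1 h1
      have e2 := hmono p.1 (s:ℤ) hp.1.2 h1
      have e3 := hmono (-(s:ℤ)) p.2 hp.2.1 h1
      have e4 := hmono p.2 (s:ℤ) hp.2.2 h1
      have e5 := hmono (-(s:ℤ)) (s:ℤ) (by omega) h1
      rw [abs_of_nonneg (by linarith : (0:ℝ) ≤ f (-(s:ℤ)) - f (s:ℤ))]
      rw [abs_sub_le_iff]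
      constructor <;> linarith
    · have e1 := hmono' (-(s:ℤ)) p.1 hp.1.1 h1
      have e2 := hmono' p.1 (s:ℤ) hp.1.2 h1
      have e3 := hmono' (-(s:ℤ)) p.2 hp.2.1 h1
      have e4 := hmono' p.2 (s:ℤ) hp.2.2 h1
      have e5 := hmono' (-(s:ℤ)) (s:ℤ) (by omega) h1
      rw [abs_of_nonpos (by linarith : f (-(s:ℤ)) - f (s:ℤ) ≤ 0)]
      rw [abs_sub_le_iff]
      constructor <;> linarith
  · rw [habs, ← hterm]
    exact Finset.le_sup' (fun p => (1/2:ℝ) * ∑ ℓ : Fin 2, |P p.1 ℓ - P p.2 ℓ|) hmem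
end

section
/- For φ > 0, the inequality 3(φ^4 - 1)^2 / (φ^8 + 4φ^6 + 14φ^4 + 4φ^2 + 1) < 1 holds if and only if √((1+√13 - √(10+2√13))/2) < φ < √((1+√13 + √(10+2√13))/2). -/
/-- The Dobrushin extremality condition for the mixed spin-(1,1/2) Ising model
on the Cayley tree of order 3. -/
theorem stmt_8 (φ : ℝ) (hφ : 0 < φ) :
    3 * (φ ^ 4 - 1) ^ 2 / (φ ^ 8 + 4 * φ ^ 6 + 14 * φ ^ 4 + 4 * φ ^ 2 + 1) < 1 ↔
    Real.sqrt ((1 + Real.sqrt 13 - Real.sqrt (10 + 2 * Real.sqrt 13)) / 2) < φ ∧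
    φ < Real.sqrt ((1 + Real.sqrt 13 + Real.sqrt (10 + 2 * Real.sqrt 13)) / 2) := by
  set s := Real.sqrt 13 with hsdef
  have hs : s ^ 2 = 13 := Real.sq_sqrt (by norm_num)
  have hs0 : 0 < s := Real.sqrt_pos.mpr (by norm_num)
  have hs3 : 3 < s := by nlinarith
  set r := Real.sqrt (10 + 2 * s) with hrdef
  have hr : r ^ 2 = 10 + 2 * s := Real.sq_sqrt (by nlinarith)
  have hr0 : 0 < r := Real.sqrt_pos.mpr (by nlinarith)
  have hrs : r < 1 + s := by nlinarith
  have hD : (0:ℝ) < φ ^ 8 + 4 * φ ^ 6 + 14 * φ ^ 4 + 4 * φ ^ 2 + 1 := by positivity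
  have hpos2 : 0 < φ ^ 4 - (1 - s) * φ ^ 2 + 1 := by nlinarith [sq_nonneg φ, sq_nonneg (φ^2)]
  rw [div_lt_one hD]
  have key : 3 * (φ ^ 4 - 1) ^ 2 < φ ^ 8 + 4 * φ ^ 6 + 14 * φ ^ 4 + 4 * φ ^ 2 + 1 ↔
      φ ^ 4 - (1 + s) * φ ^ 2 + 1 < 0 := by
    constructor
    · intro h
      have hq : (φ ^ 4 - (1 + s) * φ ^ 2 + 1) * (φ ^ 4 - (1 - s) * φ ^ 2 + 1) < 0 := by
        nlinarith
      by_contra h'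
      push_neg at h'
      nlinarith [mul_nonneg h' hpos2.le]
    · intro h
      nlinarith [mul_neg_of_neg_of_pos h hpos2]
  rw [key]
  have hA : Real.sqrt ((1 + s - r) / 2) < φ ↔ (1 + s - r) / 2 < φ ^ 2 :=
    Real.sqrt_lt' hφ
  have hB : φ < Real.sqrt ((1 + s + r) / 2) ↔ φ ^ 2 < (1 + s + r) / 2 :=
    Real.lt_sqrt hφ.le
  rw [hA, hB]
  constructor
  · intro h
    constructor
    · nlinarith [sq_nonneg (2 * φ ^ 2 - (1 + s) + r)]
    · nlinarith [sq_nonneg (2 * φ ^ 2 - (1 + s) - r)]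
  · rintro ⟨h1, h2⟩
    nlinarith [mul_pos (show (0:ℝ) < φ ^ 2 - (1 + s - r) / 2 by linarith)
      (show (0:ℝ) < (1 + s + r) / 2 - φ ^ 2 by linarith)]
end

section
/- Let Δ(φ) = φ^8 + 4φ^6 + 14φ^4 + 4φ^2 + 1 and consider the 3×3 stochastic matrix M = (1/Δ)·[[a,b,c],[d,b,d],[c,b,a]] with a = (φ²+1)²(φ⁴+1), b = 8φ⁴, c = 2φ²(φ²+1)², d = (φ²+1)⁴/2. Then the probability vector π with π₀ = 8φ⁴/Δ(φ) and π_{±1} = (φ^8 + 4φ^6 + 6φ^4 + 4φ^2 + 1)/(2Δ(φ)) satisfies πM = π and π₀ + 2π_{±1} = 1. -/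
open Matrix

/-- The vector `π` with `π₀ = 8φ⁴/Δ` and `π_{±1} = (φ^8+4φ^6+6φ^4+4φ^2+1)/(2Δ)`
is stationary for the induced 3×3 chain on the spin-1 layer, and sums to 1. -/
theorem stmt_16 (φ : ℝ) (hφ : 0 < φ) (Δ a b c d : ℝ)
    (hΔ : Δ = φ ^ 8 + 4 * φ ^ 6 + 14 * φ ^ 4 + 4 * φ ^ 2 + 1)
    (ha : a = (φ ^ 2 + 1) ^ 2 * (φ ^ 4 + 1))
    (hb : b = 8 * φ ^ 4)
    (hc : c = 2 * φ ^ 2 * (φ ^ 2 + 1) ^ 2)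
    (hd : d = (φ ^ 2 + 1) ^ 4 / 2)
    (M : Matrix (Fin 3) (Fin 3) ℝ)
    (hM : M = (1 / Δ) • (!![a, b, c; d, b, d; c, b, a]))
    (π : Fin 3 → ℝ)
    (hπ : π = ![(φ ^ 8 + 4 * φ ^ 6 + 6 * φ ^ 4 + 4 * φ ^ 2 + 1) / (2 * Δ),
                8 * φ ^ 4 / Δ,
                (φ ^ 8 + 4 * φ ^ 6 + 6 * φ ^ 4 + 4 * φ ^ 2 + 1) / (2 * Δ)]) :
    π ᵥ* M = π ∧
    8 * φ ^ 4 / Δ + 2 * ((φ ^ 8 + 4 * φ ^ 6 + 6 * φ ^ 4 + 4 * φ ^ 2 + 1) / (2 * Δ)) = 1 := by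
  have hΔ0 : Δ ≠ 0 := by
    subst hΔ; positivity
  subst ha hb hc hd hM hπ
  constructor
  · funext i
    fin_cases i <;>
      simp [vecMul, dotProduct, Fin.sum_univ_three, Matrix.smul_apply] <;>
      field_simp <;> subst hΔ <;> ring
  · field_simp
    subst hΔ; ring
end
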